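/- Let ℓ ≥ 2, 0 ≤ k ≤ ℓ, r ≥ 1. The intersection of the projective curve F̄_z ⊂ ℙ^ℓ(ℂ) (defined by the homogenized equations y_1⋯y_k·(y_1^r − y_ℓ^r) = z_1·y_0^{k+r} and z_i·(y_1^r − y_ℓ^r) = z_1·(y_i^r − y_ℓ^r) for 2 ≤ i ≤ ℓ−1) with the hyperplane at infinity {y_0 = 0} consists of exactly k·r^{ℓ-2} + r^{ℓ-1} distinct points, provided z_1,...,z_{ℓ-1} are nonzero and pairwise distinct. -/

import Mathlib

/-
On `y₀ = 0` the equations of the curve say that `(y₁ʳ, …, y_ℓʳ) = s • 1 + t • z` for some `s, t`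
(recall `z_ℓ = 0`). If `t = 0` the point lies in the fibre of the coordinatewise `r`-th power map
over `(0 : 1 : … : 1)`; otherwise the first equation forces some `yᵢ = 0` with `1 ≤ i ≤ k`, and
the point lies in the fibre over `(0 : z₁ - zᵢ : … : z_ℓ - zᵢ)`. The fibre over a point with
`m` nonzero coordinates has `r ^ (m - 1)` points (fix one nonzero coordinate of the
representative, then each other nonzero coordinate has `r` choices), and these fibres are
pairwise disjoint because, the `zᵢ` being distinct, their zero patterns differ.
-/

open Projectivization

/-- The `i`-th homogeneous coordinate (for `0 ≤ i ≤ ℓ`) of a vector `v : Fin (ℓ+1) → ℂ`. -/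
noncomputable def homCoord (ℓ : ℕ) (v : Fin (ℓ + 1) → ℂ) (i : ℕ) : ℂ :=
  if h : i < ℓ + 1 then v ⟨i, h⟩ else 0

/-- The projective curve `F̄_z ⊂ ℙ^ℓ(ℂ)` defined by the homogenized equations
`y_1 ⋯ y_k (y_1^r - y_ℓ^r) = z_1 y_0^(k+r)` and
`z_i (y_1^r - y_ℓ^r) = z_1 (y_i^r - y_ℓ^r)` for `2 ≤ i ≤ ℓ-1`. -/
def projCurve (ℓ k r : ℕ) (z : ℕ → ℂ) : Set (Projectivization ℂ (Fin (ℓ + 1) → ℂ)) :=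
  {P | (∏ a ∈ Finset.Icc 1 k, homCoord ℓ P.rep a) *
        (homCoord ℓ P.rep 1 ^ r - homCoord ℓ P.rep ℓ ^ r) =
          z 1 * homCoord ℓ P.rep 0 ^ (k + r) ∧
    ∀ i ∈ Finset.Icc 2 (ℓ - 1),
      z i * (homCoord ℓ P.rep 1 ^ r - homCoord ℓ P.rep ℓ ^ r) =
        z 1 * (homCoord ℓ P.rep i ^ r - homCoord ℓ P.rep ℓ ^ r)}

open Polynomial Finset
open scoped LinearAlgebra.Projectivization

lemma Complex.card_nthRootsFinset {r : ℕ} (hr : r ≠ 0) {a : ℂ} (ha : a ≠ 0) :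
    #(nthRootsFinset r a) = r := by
  classical
  have hζ := Complex.isPrimitiveRoot_exp r hr
  rw [nthRootsFinset_def, Multiset.toFinset_card_of_nodup (hζ.nthRoots_nodup ha),
    hζ.card_nthRoots, if_pos (IsAlgClosed.exists_pow_nat_eq a (Nat.pos_of_ne_zero hr))]

lemma Polynomial.nthRootsFinset_zero_right {R : Type*} [CommRing R] [IsDomain R] {r : ℕ}
    (hr : r ≠ 0) : nthRootsFinset r (0 : R) = {0} := by
  ext x
  rw [mem_nthRootsFinset (Nat.pos_of_ne_zero hr), pow_eq_zero_iff hr, mem_singleton]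

section powFiber

variable {ι : Type*} {r : ℕ}

/-- The fibre over `[w]` of the coordinatewise `r`-th power map `ℙ(ℂ^ι) → ℙ(ℂ^ι)`. -/
def powFiber (r : ℕ) (w : ι → ℂ) : Set (ℙ ℂ (ι → ℂ)) :=
  {P | ∃ a ≠ 0, ∀ j, P.rep j ^ r = a * w j}

lemma rep_eq_zero_iff_of_mem_powFiber (hr : r ≠ 0) {w : ι → ℂ} {P : ℙ ℂ (ι → ℂ)}
    (hP : P ∈ powFiber r w) (j : ι) : P.rep j = 0 ↔ w j = 0 := by
  obtain ⟨a, ha, hPw⟩ := hP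
  rw [← pow_eq_zero_iff hr, hPw, mul_eq_zero, or_iff_right ha]

lemma disjoint_powFiber (hr : r ≠ 0) {w w' : ι → ℂ} {j : ι} (hw : w j = 0) (hw' : w' j ≠ 0) :
    Disjoint (powFiber r w) (powFiber r w') :=
  Set.disjoint_left.2 fun _ hP hP' => hw' <|
    (rep_eq_zero_iff_of_mem_powFiber hr hP' j).1 ((rep_eq_zero_iff_of_mem_powFiber hr hP j).2 hw)

lemma mk_mem_powFiber {w : ι → ℂ} {v : ι → ℂ} (hv : v ≠ 0) (hvw : ∀ j, v j ^ r = w j) :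
    mk ℂ v hv ∈ powFiber r w := by
  obtain ⟨u, hu⟩ := exists_smul_eq_mk_rep ℂ v hv
  refine ⟨(u : ℂ) ^ r, pow_ne_zero r u.ne_zero, fun j => ?_⟩
  rw [← hu, Pi.smul_apply, Units.smul_def, smul_eq_mul, mul_pow, hvw]

variable [Fintype ι] [DecidableEq ι]

/-- Representatives of the points of `powFiber r w`, normalized by `v p = ρ` where
`ρ ^ r = w p`. -/
noncomputable def pivotedRoots (r : ℕ) (w : ι → ℂ) (p : ι) (ρ : ℂ) : Finset (ι → ℂ) :=
  Fintype.piFinset fun j => if j = p then {ρ} else nthRootsFinset r (w j)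

lemma mem_pivotedRoots (hr : r ≠ 0) {w : ι → ℂ} {p : ι} {ρ : ℂ} (hρ : ρ ^ r = w p)
    {v : ι → ℂ} : v ∈ pivotedRoots r w p ρ ↔ v p = ρ ∧ ∀ j, v j ^ r = w j := by
  simp only [pivotedRoots, Fintype.mem_piFinset]
  constructor
  · intro hv
    have hp : v p = ρ := by simpa using hv p
    refine ⟨hp, fun j => ?_⟩
    by_cases hj : j = p
    · rw [hj, hp, hρ]
    · simpa [hj, mem_nthRootsFinset (Nat.pos_of_ne_zero hr)] using hv j
  · rintro ⟨hp, hv⟩ j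
    split_ifs with hj
    · rw [hj, hp, mem_singleton]
    · rw [mem_nthRootsFinset (Nat.pos_of_ne_zero hr)]
      exact hv j

lemma card_pivotedRoots (hr : r ≠ 0) {w : ι → ℂ} {p : ι} (hp : w p ≠ 0) (ρ : ℂ) :
    #(pivotedRoots r w p ρ) = r ^ (#{j | w j ≠ 0} - 1) := by
  have hcard : ∀ j, #(if j = p then {ρ} else nthRootsFinset r (w j)) =
      if j ∈ ({j | w j ≠ 0} : Finset ι).erase p then r else 1 := by
    intro j
    by_cases hj : j = p
    · simp [hj]
    by_cases hwj : w j = 0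
    · simp [hj, hwj, nthRootsFinset_zero_right hr]
    · simp [hj, hwj, Complex.card_nthRootsFinset hr]
  rw [pivotedRoots, Fintype.card_piFinset, Fintype.prod_congr _ _ hcard, Fintype.prod_ite_mem,
    prod_const, card_erase_of_mem (by simpa using hp)]

lemma exists_mem_pivotedRoots_mk_eq (hr : r ≠ 0) {w : ι → ℂ} {p : ι} {ρ : ℂ}
    (hρ : ρ ^ r = w p) (hp : w p ≠ 0) {P : ℙ ℂ (ι → ℂ)} (hP : P ∈ powFiber r w) :
    ∃ v ∈ pivotedRoots r w p ρ, ∃ hv : v ≠ 0, mk ℂ v hv = P := by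
  have hPp : P.rep p ≠ 0 := (rep_eq_zero_iff_of_mem_powFiber hr hP p).not.2 hp
  obtain ⟨a, ha, hPw⟩ := hP
  have hc : ρ / P.rep p ≠ 0 := div_ne_zero (ne_zero_pow hr (hρ ▸ hp)) hPp
  refine ⟨(ρ / P.rep p) • P.rep, (mem_pivotedRoots hr hρ).2 ⟨?_, fun j => ?_⟩,
    smul_ne_zero hc P.rep_nonzero, ?_⟩
  · simp [hPp]
  · rw [Pi.smul_apply, smul_eq_mul, mul_pow, div_pow, hPw j, hPw p, hρ]
    field_simp
  · exact ((mk_eq_mk_iff' ℂ _ _ _ P.rep_nonzero).2 ⟨_, rfl⟩).trans P.mk_rep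

theorem ncard_powFiber (hr : r ≠ 0) {w : ι → ℂ} {m : ℕ} (hw : #{j | w j ≠ 0} = m + 1) :
    (powFiber r w).ncard = r ^ m := by
  obtain ⟨p, hp⟩ : ∃ p, w p ≠ 0 := by
    obtain ⟨p, hp⟩ := card_pos.1 (hw.trans_gt m.succ_pos)
    exact ⟨p, (mem_filter.1 hp).2⟩
  obtain ⟨ρ, hρ⟩ := IsAlgClosed.exists_pow_nat_eq (w p) (Nat.pos_of_ne_zero hr)
  have hρ0 : ρ ≠ 0 := ne_zero_pow hr (hρ ▸ hp)
  have hne : ∀ v ∈ pivotedRoots r w p ρ, v ≠ 0 := fun v hv h0 => hρ0 <| by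
    rw [← ((mem_pivotedRoots hr hρ).1 hv).1, h0, Pi.zero_apply]
  calc (powFiber r w).ncard = (pivotedRoots r w p ρ : Set (ι → ℂ)).ncard := by
        refine (Set.ncard_congr (fun v hv => mk ℂ v (hne v hv)) (fun v hv => ?_) ?_ ?_).symm
        · exact mk_mem_powFiber _ ((mem_pivotedRoots hr hρ).1 hv).2
        · intro v v' hv hv' hvv'
          obtain ⟨c, hc⟩ := (mk_eq_mk_iff' ℂ _ _ _ _).1 hvv'
          have hc1 : c = 1 := by
            have hcp := congr_fun hc p
            rw [Pi.smul_apply, smul_eq_mul, ((mem_pivotedRoots hr hρ).1 hv).1,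
              ((mem_pivotedRoots hr hρ).1 hv').1] at hcp
            exact (mul_eq_right₀ hρ0).1 hcp
          rw [← hc, hc1, one_smul]
        · intro P hP
          obtain ⟨v, hv, hv0, rfl⟩ := exists_mem_pivotedRoots_mk_eq hr hρ hp hP
          exact ⟨v, hv, rfl⟩
    _ = r ^ m := by rw [Set.ncard_coe_finset, card_pivotedRoots hr hp, hw, Nat.add_sub_cancel]

end powFiber

lemma homCoord_val {ℓ : ℕ} (v : Fin (ℓ + 1) → ℂ) (j : Fin (ℓ + 1)) : homCoord ℓ v j = v j :=
  dif_pos j.isLt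

lemma exists_homCoord_ne_zero {ℓ : ℕ} {v : Fin (ℓ + 1) → ℂ} (hv : v ≠ 0)
    (h0 : homCoord ℓ v 0 = 0) : ∃ n ∈ Icc 1 ℓ, homCoord ℓ v n ≠ 0 := by
  by_contra! h
  refine hv (funext fun j => ?_)
  rw [← homCoord_val v j, Pi.zero_apply]
  rcases Nat.eq_zero_or_pos j with hj | hj
  · rw [hj, h0]
  · exact h j (mem_Icc.2 ⟨hj, Nat.lt_succ_iff.1 j.isLt⟩)

def vecAtInfinity (ℓ : ℕ) (W : ℕ → ℂ) : Fin (ℓ + 1) → ℂ :=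
  fun j => if (j : ℕ) = 0 then 0 else W j

lemma card_vecAtInfinity_ne_zero (ℓ : ℕ) (W : ℕ → ℂ) :
    #{j | vecAtInfinity ℓ W j ≠ 0} = #{n ∈ Icc 1 ℓ | W n ≠ 0} := by
  refine card_nbij (fun j => (j : ℕ)) (fun j hj => ?_) Fin.val_injective.injOn (fun n hn => ?_)
  · have hj := (mem_filter.1 hj).2
    simp only [vecAtInfinity, ne_eq, ite_eq_left_iff, not_forall] at hj
    obtain ⟨hj0, hW⟩ := hj
    exact mem_filter.2 ⟨mem_Icc.2 ⟨Nat.pos_of_ne_zero hj0, Nat.lt_succ_iff.1 j.isLt⟩, hW⟩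
  · obtain ⟨hn, hW⟩ := mem_filter.1 (mem_coe.1 hn)
    obtain ⟨hn1, hnℓ⟩ := mem_Icc.1 hn
    refine ⟨⟨n, Nat.lt_succ_of_le hnℓ⟩, ?_, rfl⟩
    simp [vecAtInfinity, hW, Nat.one_le_iff_ne_zero.1 hn1]

lemma mem_powFiber_vecAtInfinity {ℓ r : ℕ} (hr : r ≠ 0) {W : ℕ → ℂ}
    {P : ℙ ℂ (Fin (ℓ + 1) → ℂ)} : P ∈ powFiber r (vecAtInfinity ℓ W) ↔
      homCoord ℓ P.rep 0 = 0 ∧ ∃ a ≠ 0, ∀ n ∈ Icc 1 ℓ, homCoord ℓ P.rep n ^ r = a * W n := by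
  constructor
  · rintro ⟨a, ha, hP⟩
    refine ⟨?_, a, ha, fun n hn => ?_⟩
    · have h0 := hP 0
      rw [← homCoord_val P.rep 0, Fin.val_zero] at h0
      simpa [vecAtInfinity, hr] using h0
    · obtain ⟨hn1, hnℓ⟩ := mem_Icc.1 hn
      simpa [← homCoord_val, vecAtInfinity, Nat.one_le_iff_ne_zero.1 hn1]
        using hP ⟨n, Nat.lt_succ_of_le hnℓ⟩
  · rintro ⟨h0, a, ha, hP⟩
    refine ⟨a, ha, fun j => ?_⟩
    rw [← homCoord_val P.rep j, vecAtInfinity]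
    split_ifs with hj
    · rw [hj, h0, zero_pow hr, mul_zero]
    · exact hP j (mem_Icc.2 ⟨Nat.pos_of_ne_zero hj, Nat.lt_succ_iff.1 j.isLt⟩)

lemma disjoint_powFiber_vecAtInfinity {ℓ r : ℕ} (hr : r ≠ 0) {W W' : ℕ → ℂ} {n : ℕ}
    (hn : n ∈ Icc 1 ℓ) (hW : W n = 0) (hW' : W' n ≠ 0) :
    Disjoint (powFiber r (vecAtInfinity ℓ W)) (powFiber r (vecAtInfinity ℓ W')) := by
  obtain ⟨hn1, hnℓ⟩ := mem_Icc.1 hn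
  refine disjoint_powFiber hr (j := ⟨n, Nat.lt_succ_of_le hnℓ⟩) ?_ ?_ <;>
    simpa [vecAtInfinity, Nat.one_le_iff_ne_zero.1 hn1]

lemma ncard_powFiber_vecAtInfinity_one {ℓ r : ℕ} (hr : r ≠ 0) (hℓ : 1 ≤ ℓ) :
    (powFiber r (vecAtInfinity ℓ 1)).ncard = r ^ (ℓ - 1) := by
  refine ncard_powFiber hr ?_
  simp only [card_vecAtInfinity_ne_zero, Pi.one_apply, ne_eq, one_ne_zero, not_false_eq_true,
    filter_true, Nat.card_Icc]
  omega

lemma ncard_powFiber_vecAtInfinity_sub {ℓ r : ℕ} (hr : r ≠ 0) (hℓ : 2 ≤ ℓ) {z : ℕ → ℂ}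
    (hz : Set.InjOn z (Icc 1 ℓ)) {i : ℕ} (hi : i ∈ Icc 1 ℓ) :
    (powFiber r (vecAtInfinity ℓ (z · - z i))).ncard = r ^ (ℓ - 2) := by
  refine ncard_powFiber hr ?_
  have hne : ∀ n ∈ Icc 1 ℓ, z n - z i ≠ 0 ↔ n ≠ i := fun n hn =>
    sub_ne_zero.trans (hz.ne_iff (mem_coe.2 hn) (mem_coe.2 hi))
  rw [card_vecAtInfinity_ne_zero, filter_congr hne, filter_ne', card_erase_of_mem hi,
    Nat.card_Icc]
  omega

section curve

variable {ℓ k r : ℕ} {z : ℕ → ℂ}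

lemma mem_powFiber_of_mem_projCurve (hr : r ≠ 0) (hk : k ≤ ℓ) (hzℓ : z ℓ = 0) (hz1 : z 1 ≠ 0)
    {P : ℙ ℂ (Fin (ℓ + 1) → ℂ)} (hP : P ∈ projCurve ℓ k r z) (h0 : homCoord ℓ P.rep 0 = 0) :
    P ∈ powFiber r (vecAtInfinity ℓ 1) ∨
      ∃ i ∈ Icc 1 k, P ∈ powFiber r (vecAtInfinity ℓ (z · - z i)) := by
  simp only [mem_powFiber_vecAtInfinity hr, Pi.one_apply, mul_one, h0, true_and]
  obtain ⟨hprod, hrel⟩ := hP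
  set y := homCoord ℓ P.rep
  set t := y 1 ^ r - y ℓ ^ r
  have hlin : ∀ j ∈ Icc 1 ℓ, z j * t = z 1 * (y j ^ r - y ℓ ^ r) := by
    intro j hj
    obtain ⟨hj1, hjℓ⟩ := mem_Icc.1 hj
    rcases (show j = 1 ∨ j = ℓ ∨ j ∈ Icc 2 (ℓ - 1) by rw [mem_Icc]; omega) with rfl | rfl | hj
    · rfl
    · rw [hzℓ, sub_self, zero_mul, mul_zero]
    · exact hrel j hj
  by_cases ht : t = 0
  · left
    have hall : ∀ n ∈ Icc 1 ℓ, y n ^ r = y ℓ ^ r := fun n hn => by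
      have h := hlin n hn
      rw [ht, mul_zero, eq_comm, mul_eq_zero, sub_eq_zero] at h
      exact h.resolve_left hz1
    obtain ⟨n, hn, hyn⟩ := exists_homCoord_ne_zero P.rep_nonzero h0
    exact ⟨y ℓ ^ r, hall n hn ▸ pow_ne_zero r hyn, hall⟩
  · right
    rw [h0, zero_pow (by omega), mul_zero, mul_eq_zero, or_iff_left ht,
      prod_eq_zero_iff] at hprod
    obtain ⟨i, hi, hyi⟩ := hprod
    have hiℓ : i ∈ Icc 1 ℓ := Icc_subset_Icc_right hk hi
    refine ⟨i, hi, t / z 1, div_ne_zero ht hz1, fun n hn => ?_⟩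
    have hn' := hlin n hn
    have hi' := hlin i hiℓ
    rw [hyi, zero_pow hr] at hi'
    field_simp
    linear_combination hi' - hn'

lemma mem_projCurve_of_mem_powFiber_one (hr : r ≠ 0) (hℓ : 1 ≤ ℓ)
    {P : ℙ ℂ (Fin (ℓ + 1) → ℂ)} (hP : P ∈ powFiber r (vecAtInfinity ℓ 1)) :
    P ∈ projCurve ℓ k r z := by
  obtain ⟨h0, a, -, hpow⟩ := (mem_powFiber_vecAtInfinity hr).1 hP
  have hpow' : ∀ n ∈ Icc 1 ℓ, homCoord ℓ P.rep n ^ r = a := fun n hn =>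
    (hpow n hn).trans (mul_one a)
  refine ⟨?_, fun j hj => ?_⟩
  · rw [hpow' 1 (mem_Icc.2 ⟨le_rfl, hℓ⟩), hpow' ℓ (mem_Icc.2 ⟨hℓ, le_rfl⟩), h0, sub_self,
      mul_zero, zero_pow (by omega), mul_zero]
  · rw [hpow' 1 (mem_Icc.2 ⟨le_rfl, hℓ⟩), hpow' ℓ (mem_Icc.2 ⟨hℓ, le_rfl⟩),
      hpow' j (Icc_subset_Icc (by omega) (by omega) hj), sub_self, mul_zero, mul_zero]

lemma mem_projCurve_of_mem_powFiber_sub (hr : r ≠ 0) (hk : k ≤ ℓ) (hzℓ : z ℓ = 0)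
    {i : ℕ} (hi : i ∈ Icc 1 k) {P : ℙ ℂ (Fin (ℓ + 1) → ℂ)}
    (hP : P ∈ powFiber r (vecAtInfinity ℓ (z · - z i))) : P ∈ projCurve ℓ k r z := by
  obtain ⟨h0, a, -, hpow⟩ := (mem_powFiber_vecAtInfinity hr).1 hP
  have hiℓ : i ∈ Icc 1 ℓ := Icc_subset_Icc_right hk hi
  have hℓ : 1 ≤ ℓ := (mem_Icc.1 hiℓ).1.trans (mem_Icc.1 hiℓ).2
  have hyi : homCoord ℓ P.rep i = 0 := by
    rw [← pow_eq_zero_iff hr, hpow i hiℓ, sub_self, mul_zero]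
  refine ⟨?_, fun j hj => ?_⟩
  · rw [prod_eq_zero hi hyi, zero_mul, h0, zero_pow (by omega), mul_zero]
  · rw [hpow 1 (mem_Icc.2 ⟨le_rfl, hℓ⟩), hpow ℓ (mem_Icc.2 ⟨hℓ, le_rfl⟩),
      hpow j (Icc_subset_Icc (by omega) (by omega) hj)]
    linear_combination a * (z 1 - z j) * hzℓ

lemma projCurve_inter_eq (hr : r ≠ 0) (hℓ : 1 ≤ ℓ) (hk : k ≤ ℓ) (hzℓ : z ℓ = 0)
    (hz1 : z 1 ≠ 0) :
    projCurve ℓ k r z ∩ {P | homCoord ℓ P.rep 0 = 0} =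
      powFiber r (vecAtInfinity ℓ 1) ∪
        ⋃ i ∈ Icc 1 k, powFiber r (vecAtInfinity ℓ (z · - z i)) := by
  ext P
  simp only [Set.mem_inter_iff, Set.mem_ofPred_eq, Set.mem_union, Set.mem_iUnion, exists_prop]
  constructor
  · rintro ⟨hP, h0⟩
    exact mem_powFiber_of_mem_projCurve hr hk hzℓ hz1 hP h0
  · rintro (hP | ⟨i, hi, hP⟩)
    · exact ⟨mem_projCurve_of_mem_powFiber_one hr hℓ hP,
        ((mem_powFiber_vecAtInfinity hr).1 hP).1⟩
    · exact ⟨mem_projCurve_of_mem_powFiber_sub hr hk hzℓ hi hP,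
        ((mem_powFiber_vecAtInfinity hr).1 hP).1⟩

end curve

lemma injOn_Icc_of_eq_zero {ℓ : ℕ} {z : ℕ → ℂ} (hℓ : 1 ≤ ℓ) (hzℓ : z ℓ = 0)
    (hznz : ∀ i ∈ Icc 1 (ℓ - 1), z i ≠ 0)
    (hzd : ∀ i ∈ Icc 1 (ℓ - 1), ∀ j ∈ Icc 1 (ℓ - 1), i ≠ j → z i ≠ z j) :
    Set.InjOn z (Icc 1 ℓ) := by
  have hIcc : (Icc 1 ℓ : Set ℕ) = insert ℓ ↑(Icc 1 (ℓ - 1)) := by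
    ext n
    simp only [coe_Icc, Set.mem_Icc, Set.mem_insert_iff]
    omega
  rw [hIcc, Set.injOn_insert (by simp; omega)]
  refine ⟨fun i hi j hj hij => not_not.1 fun hne => hzd i hi j hj hne hij, ?_⟩
  rintro ⟨i, hi, hzi⟩
  exact hznz i hi (hzi.trans hzℓ)

/-- Provided `z_1, …, z_{ℓ-1}` are nonzero and pairwise distinct (and `z_ℓ = 0`), the
intersection of the projective curve `F̄_z ⊂ ℙ^ℓ(ℂ)` with the hyperplane at infinity
`{y_0 = 0}` consists of exactly `k·r^(ℓ-2) + r^(ℓ-1)` distinct points. -/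
theorem stmt_8 (ℓ k r : ℕ) (hℓ : 2 ≤ ℓ) (hk : k ≤ ℓ) (hr : 1 ≤ r)
    (z : ℕ → ℂ) (hzℓ : z ℓ = 0)
    (hznz : ∀ i ∈ Finset.Icc 1 (ℓ - 1), z i ≠ 0)
    (hzd : ∀ i ∈ Finset.Icc 1 (ℓ - 1), ∀ j ∈ Finset.Icc 1 (ℓ - 1), i ≠ j → z i ≠ z j) :
    (projCurve ℓ k r z ∩ {P | homCoord ℓ P.rep 0 = 0}).ncard =
      k * r ^ (ℓ - 2) + r ^ (ℓ - 1) := by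
  have hr0 : r ≠ 0 := by omega
  have hinj := injOn_Icc_of_eq_zero (by omega) hzℓ hznz hzd
  have hkℓ : ∀ i ∈ Icc 1 k, i ∈ Icc 1 ℓ := fun i => mem_of_subset (Icc_subset_Icc_right hk)
  have hone : (powFiber r (vecAtInfinity ℓ 1)).ncard = r ^ (ℓ - 1) :=
    ncard_powFiber_vecAtInfinity_one hr0 (by omega)
  have hsub : ∀ i ∈ Icc 1 k, (powFiber r (vecAtInfinity ℓ (z · - z i))).ncard = r ^ (ℓ - 2) :=
    fun i hi => ncard_powFiber_vecAtInfinity_sub hr0 hℓ hinj (hkℓ i hi)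
  have hfin : ∀ i ∈ Icc 1 k, (powFiber r (vecAtInfinity ℓ (z · - z i))).Finite :=
    fun i hi => Set.finite_of_ncard_ne_zero (by rw [hsub i hi]; positivity)
  rw [projCurve_inter_eq hr0 (by omega) hk hzℓ (hznz 1 (mem_Icc.2 ⟨le_rfl, by omega⟩)),
    ← set_biUnion_coe,
    Set.ncard_union_eq ?disj (Set.finite_of_ncard_ne_zero (by rw [hone]; positivity))
      ((finite_toSet _).biUnion hfin),
    hone, (finite_toSet _).ncard_biUnion hfin ?pair, finsum_mem_coe_finset,
    sum_congr rfl hsub, sum_const, Nat.card_Icc, smul_eq_mul, Nat.add_sub_cancel, add_comm]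
  case disj =>
    exact Set.disjoint_iUnion₂_right.2 fun i hi =>
      (disjoint_powFiber_vecAtInfinity hr0 (hkℓ i hi) (sub_self _) one_ne_zero).symm
  case pair =>
    intro i hi i' hi' hne
    exact disjoint_powFiber_vecAtInfinity hr0 (hkℓ i hi) (sub_self _)
      (sub_ne_zero.2 (hinj.ne (mem_coe.2 (hkℓ i hi)) (mem_coe.2 (hkℓ i' hi')) hne))
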